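/- For Hermitian operators A, ρ on a D-dimensional Hilbert space, Tr(A U ρ U†) ≤ D‖A‖‖ρ‖ for any unitary U, where ‖X‖ = √(Tr(X²)/D). Consequently, under su(2) control the maximum extractable work satisfies W_c* ≤ D‖H_c^f‖‖ρ_c^i‖ + Tr(H_c^f ρ_c^i), with equality attained at T = c(π−φ)/ω by the optimal rotation. -/

import Mathlib

open Matrix

/-- Normalized Frobenius norm. -/
noncomputable def nfrob {D : ℕ} (M : Matrix (Fin D) (Fin D) ℂ) : ℝ :=
  Real.sqrt (((Mᴴ * M).trace).re / D)

/-- `evol M t = e^{-itM}`. -/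
noncomputable def evol {D : ℕ} (M : Matrix (Fin D) (Fin D) ℂ) (t : ℝ) :
    Matrix (Fin D) (Fin D) ℂ :=
  NormedSpace.exp ((((-t : ℝ) : ℂ) * Complex.I) • M)

/-!
The bound is Cauchy–Schwarz for the Hilbert–Schmidt inner product `⟨A, B⟩ = Tr(Aᴴ B)`, together
with the invariance of the Frobenius norm under unitary conjugation. For the equality case,
`S₀ ± i S₁` are eigenvectors of `ad S₂` with eigenvalues `±1`, so conjugation by `e^{-iθ S₂}`
rotates the `(S₀, S₁)`-plane by the angle `θ`. At `θ = π - φ` it turns `ρ` into `-Cρ S₀`,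
antiparallel to `H_f`, where Cauchy–Schwarz is an equality.
-/

open NormedSpace Complex

theorem cos_smul_add_sin_smul_eq_ladder {V : Type*} [AddCommGroup V] [Module ℂ V] (X Y : V)
    (φ : ℝ) :
    (Real.cos φ : ℂ) • X + (Real.sin φ : ℂ) • Y
      = (cexp (-φ * I) / 2) • (X + I • Y) + (cexp (φ * I) / 2) • (X - I • Y) := by
  have hcos : (Real.cos φ : ℂ) = cexp (-φ * I) / 2 + cexp (φ * I) / 2 := by
    rw [ofReal_cos, Complex.cos]; ring_nf
  have hsin : (Real.sin φ : ℂ) = (cexp (-φ * I) / 2 - cexp (φ * I) / 2) * I := by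
    rw [ofReal_sin, Complex.sin]; ring_nf
  rw [hcos, hsin]
  module

section Exponential

variable {𝔸 : Type*} [NormedRing 𝔸] [NormedAlgebra ℂ 𝔸] [CompleteSpace 𝔸]

theorem exp_mul_mul_exp_neg_of_commutator_eq_smul {X P : 𝔸} {a : ℂ}
    (h : X * P - P * X = a • P) : exp X * P * exp (-X) = cexp a • P := by
  let : NormedAlgebra ℚ 𝔸 := NormedAlgebra.restrictScalars ℚ ℂ 𝔸
  have hsemi : SemiconjBy P (X + algebraMap ℂ 𝔸 a) X := by
    rw [SemiconjBy, mul_add, ← Algebra.commutes, ← Algebra.smul_def, ← h, add_sub_cancel]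
  have hexp : exp (X + algebraMap ℂ 𝔸 a) = cexp a • exp X := by
    rw [exp_add_of_commute (Algebra.commutes a X).symm, ← algebraMap_exp_comm,
      ← Complex.exp_eq_exp_ℂ, ← Algebra.commutes, ← Algebra.smul_def]
  have hinv : exp X * exp (-X) = 1 := by
    rw [← exp_add_of_commute (Commute.neg_right (Commute.refl X)), add_neg_cancel,
      NormedSpace.exp_zero]
  calc exp X * P * exp (-X) = P * exp (X + algebraMap ℂ 𝔸 a) * exp (-X) := by
        rw [hsemi.exp_right.eq]
    _ = cexp a • P := by
        rw [hexp, mul_smul_comm, smul_mul_assoc, mul_assoc, hinv, mul_one]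

variable {X Y Z : 𝔸}

theorem exp_conj_cos_smul_add_sin_smul (hZX : Z * X - X * Z = I • Y)
    (hYZ : Y * Z - Z * Y = I • X) (θ φ : ℝ) :
    exp ((-θ * I : ℂ) • Z) * ((Real.cos φ : ℂ) • X + (Real.sin φ : ℂ) • Y) *
        exp ((θ * I : ℂ) • Z)
      = (Real.cos (φ + θ) : ℂ) • X + (Real.sin (φ + θ) : ℂ) • Y := by
  have hIYZ : I • (Y * Z - Z * Y) = -X := by rw [hYZ, smul_smul, I_mul_I, neg_one_smul]
  have hP : Z * (X + I • Y) - (X + I • Y) * Z = (1 : ℂ) • (X + I • Y) := by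
    calc Z * (X + I • Y) - (X + I • Y) * Z = (Z * X - X * Z) - I • (Y * Z - Z * Y) := by
          simp only [mul_add, add_mul, mul_smul_comm, smul_mul_assoc, smul_sub]; abel
      _ = (1 : ℂ) • (X + I • Y) := by rw [hZX, hIYZ, one_smul]; abel
  have hM : Z * (X - I • Y) - (X - I • Y) * Z = (-1 : ℂ) • (X - I • Y) := by
    calc Z * (X - I • Y) - (X - I • Y) * Z = (Z * X - X * Z) + I • (Y * Z - Z * Y) := by
          simp only [mul_sub, sub_mul, mul_smul_comm, smul_mul_assoc, smul_sub]; abel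
      _ = (-1 : ℂ) • (X - I • Y) := by rw [hZX, hIYZ, neg_one_smul]; abel
  have hconj : ∀ (s : ℂ) (P : 𝔸), Z * P - P * Z = s • P →
      exp ((-θ * I : ℂ) • Z) * P * exp ((θ * I : ℂ) • Z) = cexp (-θ * I * s) • P := by
    intro s P hZP
    rw [show (θ * I : ℂ) • Z = -((-θ * I : ℂ) • Z) by rw [← neg_smul, neg_mul, neg_neg]]
    apply exp_mul_mul_exp_neg_of_commutator_eq_smul
    rw [smul_mul_assoc, mul_smul_comm, ← smul_sub, hZP, smul_smul]
  rw [cos_smul_add_sin_smul_eq_ladder, cos_smul_add_sin_smul_eq_ladder, mul_add, add_mul,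
    mul_smul_comm, mul_smul_comm, smul_mul_assoc, smul_mul_assoc, hconj 1 _ hP,
    hconj (-1) _ hM, smul_smul, smul_smul, ← mul_div_right_comm, ← mul_div_right_comm,
    ← Complex.exp_add, ← Complex.exp_add]
  push_cast
  ring_nf

end Exponential

namespace Matrix

variable {𝕜 m n : Type*} [RCLike 𝕜] [Fintype m] [Fintype n]

theorem re_trace_conjTranspose_mul (A B : Matrix m n 𝕜) :
    RCLike.re (Aᴴ * B).trace = ∑ i, ∑ j, RCLike.re (star (A i j) * B i j) := by
  simp only [trace, diag, mul_apply, conjTranspose_apply, map_sum]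
  exact Finset.sum_comm

theorem re_trace_conjTranspose_mul_self (A : Matrix m n 𝕜) :
    RCLike.re (Aᴴ * A).trace = ∑ i, ∑ j, ‖A i j‖ ^ 2 := by
  simp only [re_trace_conjTranspose_mul, RCLike.star_def, RCLike.conj_mul]
  norm_cast

theorem re_trace_conjTranspose_mul_le (A B : Matrix m n 𝕜) :
    RCLike.re (Aᴴ * B).trace
      ≤ √(RCLike.re (Aᴴ * A).trace) * √(RCLike.re (Bᴴ * B).trace) := by
  simp only [re_trace_conjTranspose_mul_self, re_trace_conjTranspose_mul,
    ← Fintype.sum_prod_type']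
  calc ∑ p : m × n, RCLike.re (star (A p.1 p.2) * B p.1 p.2)
      ≤ ∑ p : m × n, ‖A p.1 p.2‖ * ‖B p.1 p.2‖ := by
        gcongr with p
        exact (RCLike.re_le_norm _).trans_eq (by rw [norm_mul, norm_star])
    _ ≤ √(∑ p : m × n, ‖A p.1 p.2‖ ^ 2) * √(∑ p : m × n, ‖B p.1 p.2‖ ^ 2) :=
        Real.sum_mul_le_sqrt_mul_sqrt _ _ _

theorem trace_conjTranspose_mul_self_unitary_conj [DecidableEq n] {U : Matrix n n 𝕜}
    (hU : U ∈ unitaryGroup n 𝕜) (B : Matrix n n 𝕜) :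
    ((U * B * Uᴴ)ᴴ * (U * B * Uᴴ)).trace = (Bᴴ * B).trace := by
  have hUU : Uᴴ * U = 1 := mem_unitaryGroup_iff'.mp hU
  rw [conjTranspose_mul, conjTranspose_mul, conjTranspose_conjTranspose]
  calc (U * (Bᴴ * Uᴴ) * (U * B * Uᴴ)).trace = (U * (Bᴴ * (Uᴴ * U) * B) * Uᴴ).trace := by
        simp only [Matrix.mul_assoc]
    _ = (Bᴴ * B).trace := by
        rw [hUU, Matrix.mul_one, trace_mul_cycle, hUU, Matrix.one_mul]

end Matrix

section NormalizedFrobenius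

variable {D : ℕ}

theorem nfrob_nonneg (M : Matrix (Fin D) (Fin D) ℂ) : 0 ≤ nfrob M := Real.sqrt_nonneg _

theorem re_trace_conjTranspose_mul_self_eq_mul_nfrob_sq (hD : 0 < D)
    (M : Matrix (Fin D) (Fin D) ℂ) : ((Mᴴ * M).trace).re = D * nfrob M ^ 2 := by
  have hM : 0 ≤ ((Mᴴ * M).trace).re := by
    rw [← RCLike.re_eq_complex_re, re_trace_conjTranspose_mul_self]; positivity
  rw [nfrob, Real.sq_sqrt (by positivity)]
  field_simp

theorem nfrob_smul (a : ℂ) (M : Matrix (Fin D) (Fin D) ℂ) : nfrob (a • M) = ‖a‖ * nfrob M := by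
  rw [nfrob, nfrob, conjTranspose_smul, smul_mul_smul_comm, trace_smul, smul_eq_mul,
    Complex.star_def, Complex.conj_mul', ← Complex.ofReal_pow, Complex.re_ofReal_mul,
    mul_div_assoc, Real.sqrt_mul (sq_nonneg _), Real.sqrt_sq (norm_nonneg _)]

theorem nfrob_unitary_conj {U : Matrix (Fin D) (Fin D) ℂ} (hU : U ∈ unitaryGroup (Fin D) ℂ)
    (B : Matrix (Fin D) (Fin D) ℂ) : nfrob (U * B * Uᴴ) = nfrob B := by
  rw [nfrob, nfrob, trace_conjTranspose_mul_self_unitary_conj hU]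

theorem re_trace_mul_unitary_conj_le (hD : 0 < D) {A : Matrix (Fin D) (Fin D) ℂ}
    (hA : A.IsHermitian) {U : Matrix (Fin D) (Fin D) ℂ} (hU : U ∈ unitaryGroup (Fin D) ℂ)
    (B : Matrix (Fin D) (Fin D) ℂ) :
    ((A * (U * B * Uᴴ)).trace).re ≤ D * nfrob A * nfrob B := by
  calc ((A * (U * B * Uᴴ)).trace).re = ((Aᴴ * (U * B * Uᴴ)).trace).re := by rw [hA.eq]
    _ ≤ √((Aᴴ * A).trace.re) * √(((U * B * Uᴴ)ᴴ * (U * B * Uᴴ)).trace.re) :=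
        re_trace_conjTranspose_mul_le A (U * B * Uᴴ)
    _ = D * nfrob A * nfrob B := by
        rw [re_trace_conjTranspose_mul_self_eq_mul_nfrob_sq hD,
          re_trace_conjTranspose_mul_self_eq_mul_nfrob_sq hD, nfrob_unitary_conj hU,
          Real.sqrt_mul (Nat.cast_nonneg _), Real.sqrt_mul (Nat.cast_nonneg _),
          Real.sqrt_sq (nfrob_nonneg _), Real.sqrt_sq (nfrob_nonneg _)]
        linear_combination (nfrob A * nfrob B) * Real.mul_self_sqrt (Nat.cast_nonneg (α := ℝ) D)

end NormalizedFrobenius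

section Evolution

variable {D : ℕ}

theorem evol_ofReal_smul (M : Matrix (Fin D) (Fin D) ℂ) (r t : ℝ) :
    evol ((r : ℂ) • M) t = evol M (r * t) := by
  rw [evol, evol, smul_smul]
  push_cast
  ring_nf

theorem conjTranspose_evol {M : Matrix (Fin D) (Fin D) ℂ} (hM : M.IsHermitian) (t : ℝ) :
    (evol M t)ᴴ = evol M (-t) := by
  rw [evol, evol, ← Matrix.exp_conjTranspose, conjTranspose_smul, hM.eq, star_mul',
    Complex.star_def, conj_I, conj_ofReal]
  push_cast
  ring_nf

theorem evol_mem_unitaryGroup {M : Matrix (Fin D) (Fin D) ℂ} (hM : M.IsHermitian) (t : ℝ) :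
    evol M t ∈ unitaryGroup (Fin D) ℂ := by
  rw [mem_unitaryGroup_iff', star_eq_conjTranspose, conjTranspose_evol hM, evol, evol,
    ← Matrix.exp_add_of_commute _ _ ((Commute.refl M).smul_left _ |>.smul_right _), ← add_smul]
  push_cast
  simp

open scoped Matrix.Norms.Operator in
theorem evol_mul_cos_smul_add_sin_smul_mul_evol_neg {X Y Z : Matrix (Fin D) (Fin D) ℂ}
    (hZX : Z * X - X * Z = I • Y) (hYZ : Y * Z - Z * Y = I • X) (θ φ : ℝ) :
    evol Z θ * ((Real.cos φ : ℂ) • X + (Real.sin φ : ℂ) • Y) * evol Z (-θ)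
      = (Real.cos (φ + θ) : ℂ) • X + (Real.sin (φ + θ) : ℂ) • Y := by
  simp only [evol, ofReal_neg, neg_neg]
  exact exp_conj_cos_smul_add_sin_smul hZX hYZ θ φ

end Evolution

theorem stmt_11_general (D : ℕ) (hD : 0 < D) (S : Fin 3 → Matrix (Fin D) (Fin D) ℂ)
    (hH : ∀ α, (S α).IsHermitian)
    (hc12 : S 1 * S 2 - S 2 * S 1 = Complex.I • S 0)
    (hc20 : S 2 * S 0 - S 0 * S 2 = Complex.I • S 1)
    (c : ℝ) (hc : 0 < c) (hnorm : ∀ α, nfrob (S α) = c)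
    (CH Cρ ω φ : ℝ) (hCH : 0 < CH) (hCρ : 0 < Cρ) (hω : 0 < ω)
    (Hf ρ Hop : Matrix (Fin D) (Fin D) ℂ)
    (hHf : Hf = (CH : ℂ) • S 0)
    (hρ : ρ = (Cρ : ℂ) • (((Real.cos φ : ℝ) : ℂ) • S 0 + ((Real.sin φ : ℝ) : ℂ) • S 1))
    (hHop : Hop = ((c⁻¹ : ℝ) : ℂ) • S 2)
    (Tstar : ℝ) (hTstar : Tstar = c * (Real.pi - φ) / ω) :
    (∀ A B : Matrix (Fin D) (Fin D) ℂ, A.IsHermitian → B.IsHermitian →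
      ∀ U ∈ Matrix.unitaryGroup (Fin D) ℂ,
        ((A * (U * B * Uᴴ)).trace).re ≤ (D : ℝ) * nfrob A * nfrob B) ∧
    (∀ U ∈ Matrix.unitaryGroup (Fin D) ℂ,
      -((Hf * (U * ρ * Uᴴ)).trace).re + ((Hf * ρ).trace).re
        ≤ (D : ℝ) * nfrob Hf * nfrob ρ + ((Hf * ρ).trace).re) ∧
    (-((Hf * (evol Hop (ω * Tstar) * ρ * evol Hop (-(ω * Tstar)))).trace).re +
        ((Hf * ρ).trace).re
      = (D : ℝ) * nfrob Hf * nfrob ρ + ((Hf * ρ).trace).re) := by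
  have hHfH : Hf.IsHermitian := hHf ▸ (hH 0).smul (by simp [IsSelfAdjoint])
  have hnHf : nfrob Hf = CH * c := by
    rw [hHf, nfrob_smul, norm_real, Real.norm_of_nonneg hCH.le, hnorm]
  refine ⟨fun A B hA _ U hU => re_trace_mul_unitary_conj_le hD hA hU B, fun U hU => ?_, ?_⟩
  · have h := re_trace_mul_unitary_conj_le hD hHfH.neg hU ρ
    rw [Matrix.neg_mul, trace_neg, neg_re, ← neg_one_smul ℂ Hf, nfrob_smul, norm_neg, norm_one,
      one_mul] at h
    linarith
  · set θ := Real.pi - φ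
    set U := evol (S 2) θ
    have hωT : c⁻¹ * (ω * Tstar) = θ := by
      rw [hTstar]
      field_simp
    have hUρ : U * ρ * Uᴴ = (-(Cρ : ℂ)) • S 0 := by
      rw [conjTranspose_evol (hH 2), hρ, mul_smul_comm, smul_mul_assoc,
        evol_mul_cos_smul_add_sin_smul_mul_evol_neg hc20 hc12, add_sub_cancel, Real.cos_pi,
        Real.sin_pi]
      push_cast
      module
    have hnρ : nfrob ρ = Cρ * c := by
      rw [← nfrob_unitary_conj (evol_mem_unitaryGroup (hH 2) θ), hUρ, nfrob_smul, norm_neg,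
        norm_real, Real.norm_of_nonneg hCρ.le, hnorm]
    have hS0 : ((S 0 * S 0).trace).re = D * c ^ 2 := by
      rw [← hnorm 0, ← re_trace_conjTranspose_mul_self_eq_mul_nfrob_sq hD, (hH 0).eq]
    have htr : ((Hf * (U * ρ * Uᴴ)).trace).re = -(CH * Cρ * (D * c ^ 2)) := by
      rw [hUρ, hHf, smul_mul_smul_comm, trace_smul, smul_eq_mul, ← ofReal_neg, ← ofReal_mul,
        re_ofReal_mul, hS0]
      ring
    rw [hHop, evol_ofReal_smul, evol_ofReal_smul, mul_neg, hωT, ← conjTranspose_evol (hH 2),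
      htr, hnHf, hnρ]
    ring

/-- Cauchy–Schwarz bound `Tr(A UρU†) ≤ D‖A‖‖ρ‖`; consequently under su(2)
control the extractable work is bounded by `D‖H_c^f‖‖ρ_c^i‖ + Tr(H_c^f ρ_c^i)`,
with equality attained at `T* = c(π-φ)/ω`. -/
theorem stmt_11 (D : ℕ) (hD : 0 < D) (S : Fin 3 → Matrix (Fin D) (Fin D) ℂ)
    (hH : ∀ α, (S α).IsHermitian)
    (hc01 : S 0 * S 1 - S 1 * S 0 = Complex.I • S 2)
    (hc12 : S 1 * S 2 - S 2 * S 1 = Complex.I • S 0)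
    (hc20 : S 2 * S 0 - S 0 * S 2 = Complex.I • S 1)
    (horth : ∀ α β, α ≠ β → (S α * S β).trace = 0)
    (c : ℝ) (hc : 0 < c) (hnorm : ∀ α, nfrob (S α) = c)
    (CH Cρ ω φ : ℝ) (hCH : 0 < CH) (hCρ : 0 < Cρ) (hω : 0 < ω)
    (hφ : φ ∈ Set.Icc 0 Real.pi)
    (Hf ρ Hop : Matrix (Fin D) (Fin D) ℂ)
    (hHf : Hf = (CH : ℂ) • S 0)
    (hρ : ρ = (Cρ : ℂ) • (((Real.cos φ : ℝ) : ℂ) • S 0 + ((Real.sin φ : ℝ) : ℂ) • S 1))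
    (hHop : Hop = ((c⁻¹ : ℝ) : ℂ) • S 2)
    (Tstar : ℝ) (hTstar : Tstar = c * (Real.pi - φ) / ω) :
    (∀ A B : Matrix (Fin D) (Fin D) ℂ, A.IsHermitian → B.IsHermitian →
      ∀ U ∈ Matrix.unitaryGroup (Fin D) ℂ,
        ((A * (U * B * Uᴴ)).trace).re ≤ (D : ℝ) * nfrob A * nfrob B) ∧
    (∀ U ∈ Matrix.unitaryGroup (Fin D) ℂ,
      -((Hf * (U * ρ * Uᴴ)).trace).re + ((Hf * ρ).trace).re
        ≤ (D : ℝ) * nfrob Hf * nfrob ρ + ((Hf * ρ).trace).re) ∧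
    (-((Hf * (evol Hop (ω * Tstar) * ρ * evol Hop (-(ω * Tstar)))).trace).re +
        ((Hf * ρ).trace).re
      = (D : ℝ) * nfrob Hf * nfrob ρ + ((Hf * ρ).trace).re) :=
  stmt_11_general D hD S hH hc12 hc20 c hc hnorm CH Cρ ω φ hCH hCρ hω Hf ρ Hop hHf hρ hHop Tstar
    hTstar
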